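/- Let Y_0 be the n×n matrix with (Y_0)_{ij} = 1 if i = j or (i > j and i+j is odd) and 0 otherwise. Then Y_0 is invertible with determinant 1, and the entries of Y_0^{-1} satisfy |(Y_0^{-1})_{ij}| = F_{i-j} for i > j, achieving the Fibonacci upper bound for inverses of matrices in K_n. -/

import Mathlib

/-!
Truncating a power series `f` to the `n × n` lower triangular Toeplitz matrix with entries
`coeff (i - j) f` is multiplicative. `Y₀` is the matrix of
`1 + x / (1 - x²) = (1 + x - x²) / (1 - x²)`, so `Y₀⁻¹` is the matrix of
`(1 - x²) / (1 + x - x²) = 1 - x / (1 + x - x²)`, whose coefficient of `x^d` is `(-1)^d F_d`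
for `d ≥ 1`.
-/

open Finset

namespace PowerSeries

variable {R : Type*}

section Semiring

variable [Semiring R] (n : ℕ)

noncomputable def lowerToeplitz (f : R⟦X⟧) : Matrix (Fin n) (Fin n) R :=
  Matrix.of fun i j => if j ≤ i then coeff ((i : ℕ) - j) f else 0

theorem lowerToeplitz_one : lowerToeplitz n (1 : R⟦X⟧) = 1 := by
  ext i j
  simp only [lowerToeplitz, Matrix.of_apply, coeff_one, Matrix.one_apply, Fin.ext_iff, Fin.le_def]
  split_ifs <;> first | rfl | (exfalso; omega)

theorem lowerToeplitz_mul (f g : R⟦X⟧) :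
    lowerToeplitz n (f * g) = lowerToeplitz n f * lowerToeplitz n g := by
  ext i j
  simp only [lowerToeplitz, Matrix.mul_apply, Matrix.of_apply, mul_ite, ite_mul, zero_mul,
    mul_zero]
  split_ifs with hji
  · rw [coeff_mul, ← sum_filter, ← sum_filter]
    symm
    refine sum_bij' (fun k _ => ((i : ℕ) - k, (k : ℕ) - j))
      (fun p hp => ⟨j + p.2, by rw [HasAntidiagonal.mem_antidiagonal] at hp; omega⟩)
      ?_ ?_ ?_ ?_ fun _ _ => rfl <;>
      intro a ha <;>
      simp only [mem_filter, mem_univ, true_and, HasAntidiagonal.mem_antidiagonal, Fin.le_def,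
        Fin.ext_iff, Prod.ext_iff] at ha hji ⊢ <;>
      omega
  · refine (sum_eq_zero fun k _ => ?_).symm
    simp only [Fin.le_def] at hji ⊢
    split_ifs <;> first | rfl | (exfalso; omega)

noncomputable def oddIndicator : R⟦X⟧ := mk fun d => if Odd d then 1 else 0

theorem lowerToeplitz_one_add_oddIndicator_apply (i j : Fin n) :
    lowerToeplitz n (1 + oddIndicator : R⟦X⟧) i j =
      if i = j ∨ (j < i ∧ (i : ℕ) % 2 ≠ (j : ℕ) % 2) then 1 else 0 := by
  simp only [lowerToeplitz, oddIndicator, Matrix.of_apply, map_add, coeff_one, coeff_mk,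
    Nat.odd_iff, Fin.ext_iff, Fin.lt_def, Fin.le_def]
  split_ifs <;> first | (exfalso; omega) | simp

end Semiring

theorem det_lowerToeplitz [CommRing R] (n : ℕ) (f : R⟦X⟧) :
    (lowerToeplitz n f).det = constantCoeff f ^ n := by
  rw [Matrix.det_of_isLowerTriangular]
  · simp [lowerToeplitz]
  · intro i j hij
    simp [lowerToeplitz, not_le.mpr (OrderDual.toDual_lt_toDual.mp hij)]

section Ring

variable [Ring R]

noncomputable def altFib : R⟦X⟧ := mk fun d => (-1) ^ d * (Nat.fib d : R)

theorem oddIndicator_mul_one_sub_X_sq : oddIndicator * (1 - X ^ 2) = (X : R⟦X⟧) := by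
  ext d
  rcases d with _ | _ | d <;>
    simp [oddIndicator, mul_sub, coeff_mul_X_pow', coeff_X, Nat.odd_add_one, parity_simps]

theorem altFib_mul_one_add_X_sub_X_sq : altFib * (1 + X - X ^ 2) = (-X : R⟦X⟧) := by
  ext d
  rcases d with _ | _ | d
  · simp [altFib]
  · simp [altFib, mul_sub, mul_add, coeff_mul_X_pow']
  · have hfib : (-1) ^ (d + 2) * (Nat.fib (d + 2) : R) + (-1) ^ (d + 1) * Nat.fib (d + 1)
        - (-1) ^ d * Nat.fib d = 0 := by
      rw [Nat.fib_add_two]; push_cast; noncomm_ring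
    simpa [altFib, mul_sub, mul_add, coeff_mul_X_pow', coeff_X] using hfib

end Ring

theorem one_add_oddIndicator_mul_one_add_altFib [CommRing R] :
    (1 + oddIndicator) * (1 + altFib) = (1 : R⟦X⟧) := by
  have hv : IsUnit (1 + X - X ^ 2 : R⟦X⟧) := isUnit_iff_constantCoeff.mpr (by simp)
  refine hv.mul_left_inj.mp ?_
  calc (1 + oddIndicator) * (1 + altFib) * (1 + X - X ^ 2)
      = (1 + oddIndicator) * (1 - X ^ 2 : R⟦X⟧) := by
        rw [mul_assoc, add_mul 1 altFib, one_mul, altFib_mul_one_add_X_sub_X_sq]; ring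
    _ = 1 * (1 + X - X ^ 2) := by rw [add_mul, oddIndicator_mul_one_sub_X_sq]; ring

end PowerSeries

open PowerSeries

/-- `Y₀` is invertible with determinant 1 and the entries of `Y₀⁻¹` attain the
Fibonacci bound: `|(Y₀⁻¹)_{ij}| = F_{i-j}` for `i > j`. -/
theorem stmt_19 (n : ℕ)
    (Y₀ : Matrix (Fin n) (Fin n) ℝ)
    (hY₀ : ∀ i j : Fin n, Y₀ i j =
      if i = j ∨ (j < i ∧ (i : ℕ) % 2 ≠ (j : ℕ) % 2) then 1 else 0) :
    IsUnit Y₀ ∧ Y₀.det = 1 ∧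
    ∀ i j : Fin n, j < i → |Y₀⁻¹ i j| = Nat.fib ((i : ℕ) - (j : ℕ)) := by
  have hY : Y₀ = lowerToeplitz n (1 + oddIndicator) :=
    Matrix.ext fun i j => by rw [hY₀, lowerToeplitz_one_add_oddIndicator_apply]
  have hinv : Y₀⁻¹ = lowerToeplitz n (1 + altFib) := by
    refine Matrix.inv_eq_right_inv ?_
    rw [hY, ← lowerToeplitz_mul, one_add_oddIndicator_mul_one_add_altFib, lowerToeplitz_one]
  have hdet : Y₀.det = 1 := by
    rw [hY, det_lowerToeplitz]
    simp [oddIndicator]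
  refine ⟨(Matrix.isUnit_iff_isUnit_det Y₀).mpr (hdet ▸ isUnit_one), hdet,
    fun i j hji => ?_⟩
  have hd : (i : ℕ) - j ≠ 0 := Nat.sub_ne_zero_of_lt hji
  simp [hinv, lowerToeplitz, hji.le, altFib, hd, abs_mul]
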